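/- Let G be a connected cubic simple graph with n vertices and m = 3n/2 edges, m even, and let N be a perfect matching of the line graph L(G). Then the n/4 subgraphs G_v of M(G) (over vertices v such that G_v contains no edge of N) are pairwise vertex-disjoint complete subgraphs on four vertices of M(G). -/

import Mathlib

variable {V : Type*}

/-- The vertex-edge graph (middle graph) of `G`: vertices are `V(G) ⊕ E(G)`;
two `e`-vertices are adjacent iff the corresponding edges of `G` are distinct and share
an endpoint; a `v`-vertex and an `e`-vertex are adjacent iff the vertex is an endpoint of
the edge; no two `v`-vertices are adjacent. -/
def middleGraph (G : SimpleGraph V) : SimpleGraph (V ⊕ G.edgeSet) where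
  Adj a b :=
    match a, b with
    | Sum.inl _, Sum.inl _ => False
    | Sum.inl u, Sum.inr e => u ∈ (e : Sym2 V)
    | Sum.inr e, Sum.inl u => u ∈ (e : Sym2 V)
    | Sum.inr e, Sum.inr f => e ≠ f ∧ ∃ v, v ∈ (e : Sym2 V) ∧ v ∈ (f : Sym2 V)
  symm := by
    refine ⟨?_⟩
    rintro (u | e) (v | f) h
    · exact h.elim
    · exact h
    · exact h
    · exact ⟨h.1.symm, h.2.imp fun v hv => ⟨hv.2, hv.1⟩⟩
  loopless := by
    refine ⟨?_⟩
    rintro (u | e) h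
    · exact h
    · exact h.1 rfl

/-- The line graph of `G`, with vertex set the edge set of `G`; two edges are adjacent
iff they are distinct and share an endpoint. -/
def lineGraph (G : SimpleGraph V) : SimpleGraph G.edgeSet where
  Adj e f := e ≠ f ∧ ∃ v, v ∈ (e : Sym2 V) ∧ v ∈ (f : Sym2 V)
  symm := ⟨fun e f h => ⟨h.1.symm, h.2.imp fun v hv => ⟨hv.2, hv.1⟩⟩⟩
  loopless := ⟨fun e h => h.1 rfl⟩

/-- `P` is a perfect matching (dimer covering) of `H`, viewed as a set of edges:
all members are edges of `H`, distinct members share no vertex, and every vertex of `H`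
lies in some member. -/
def IsPerfMatchSet {W : Type*} (H : SimpleGraph W) (P : Set (Sym2 W)) : Prop :=
  P ⊆ H.edgeSet ∧
  (∀ p ∈ P, ∀ q ∈ P, p ≠ q → ∀ a, a ∈ p → a ∉ q) ∧
  (∀ w : W, ∃ p ∈ P, w ∈ p)

/-- The number of perfect matchings (dimer coverings) of `H`. -/
noncomputable def pmCount {W : Type*} (H : SimpleGraph W) : ℕ :=
  {P : Set (Sym2 W) | IsPerfMatchSet H P}.ncard

/-- For a vertex `v` of `G`, the set of vertices of the middle graph `M(G)` consisting of
the `v`-vertex `v` together with the `e`-vertices corresponding to the edges of `G`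
incident with `v`.  For a cubic graph this induces a `K₄` in `M(G)`, denoted `G_v`. -/
def K4set (G : SimpleGraph V) (v : V) : Set (V ⊕ G.edgeSet) :=
  {a | a = Sum.inl v ∨ ∃ e : G.edgeSet, v ∈ (e : Sym2 V) ∧ a = Sum.inr e}

/-- Given a set `N` of edges of the line graph of `G`, the set of vertices `v` of `G`
such that the `K₄`-subgraph `G_v` of `M(G)` contains no edge of `N`, i.e. no member of
`N` has both endpoints incident with `v`. -/
def badSet (G : SimpleGraph V) (N : Set (Sym2 G.edgeSet)) : Set V :=
  {v | ∀ p ∈ N, ¬ ∀ x ∈ p, v ∈ (x : Sym2 V)}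

/-! Each edge of `N` is a pair of edges of `G` meeting at a unique vertex, and in a cubic graph
two disjoint such pairs cannot meet at the same vertex. So the vertices `v` whose `G_v` contains
an edge of `N` are in bijection with `N`, which has `m / 2 = 3n / 4` elements. Two vertices with
`G_v` free of `N` are never adjacent: the edge joining them is covered by `N`, and the meeting
vertex of the covering pair is an endpoint of that edge. -/

theorem IsPerfMatchSet.two_mul_ncard {W : Type*} [Finite W] {H : SimpleGraph W}
    {P : Set (Sym2 W)} (hP : IsPerfMatchSet H P) : 2 * P.ncard = Nat.card W := by
  classical
  have := Fintype.ofFinite W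
  obtain ⟨hsub, hdisj, hcov⟩ := hP
  have hunion : P.toFinset.biUnion Sym2.toFinset = Finset.univ :=
    Finset.eq_univ_of_forall fun w =>
      let ⟨p, hp, hwp⟩ := hcov w
      Finset.mem_biUnion.2 ⟨p, Set.mem_toFinset.2 hp, Sym2.mem_toFinset.2 hwp⟩
  have hpairwise : (P.toFinset : Set (Sym2 W)).PairwiseDisjoint Sym2.toFinset := by
    intro p hp q hq hpq
    simp only [Set.coe_toFinset] at hp hq
    exact Finset.disjoint_left.2 fun w hwp hwq =>
      hdisj p hp q hq hpq w (Sym2.mem_toFinset.1 hwp) (Sym2.mem_toFinset.1 hwq)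
  have hcard : ∀ p ∈ P.toFinset, p.toFinset.card = 2 := fun p hp =>
    Sym2.card_toFinset_of_not_isDiag p
      (H.not_isDiag_of_mem_edgeSet (hsub (Set.mem_toFinset.1 hp)))
  rw [Nat.card_eq_fintype_card, ← Finset.card_univ, ← hunion, Finset.card_biUnion hpairwise,
    Finset.sum_congr rfl hcard, Finset.sum_const, smul_eq_mul, Set.ncard_eq_toFinset_card',
    mul_comm]

theorem SimpleGraph.IsRegularOfDegree.two_mul_card_edgeSet [Fintype V] {G : SimpleGraph V}
    [DecidableRel G.Adj] {k : ℕ} (hG : G.IsRegularOfDegree k) :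
    2 * Nat.card G.edgeSet = k * Fintype.card V := by
  classical
  rw [Nat.card_eq_fintype_card, ← G.edgeFinset_card, ← G.sum_degrees_eq_twice_card_edges,
    Finset.sum_congr rfl fun v _ => hG v, Finset.sum_const, smul_eq_mul, Finset.card_univ,
    mul_comm]

section MiddleGraph

variable (G : SimpleGraph V)

theorem existsUnique_common_vertex_of_mem_edgeSet_lineGraph {p : Sym2 G.edgeSet}
    (hp : p ∈ (lineGraph G).edgeSet) : ∃! v : V, ∀ x ∈ p, v ∈ (x : Sym2 V) := by
  induction p using Sym2.ind with
  | h e f =>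
  obtain ⟨hne, u, hue, huf⟩ := hp
  refine ⟨u, by simp [hue, huf], fun v hv => ?_⟩
  by_contra hvu
  have he := (Sym2.mem_and_mem_iff hvu).1 ⟨hv e (Sym2.mem_mk_left e f), hue⟩
  have hf := (Sym2.mem_and_mem_iff hvu).1 ⟨hv f (Sym2.mem_mk_right e f), huf⟩
  exact hne (Subtype.ext (he.trans hf.symm))

theorem ncard_setOf_mem_edgeSet_eq_degree (v : V) [Fintype (G.neighborSet v)] :
    {e : G.edgeSet | v ∈ (e : Sym2 V)}.ncard = G.degree v := by
  classical
  have himage : Subtype.val '' {e : G.edgeSet | v ∈ (e : Sym2 V)} = G.incidenceSet v := by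
    ext x
    simp [SimpleGraph.incidenceSet, and_comm]
  rw [← Set.ncard_image_of_injective _ Subtype.val_injective, himage,
    Set.ncard_eq_toFinset_card', Set.toFinset_card, G.card_incidenceSet_eq_degree]

theorem K4set_eq_insert_image (v : V) :
    K4set G v = insert (Sum.inl v) (Sum.inr '' {e : G.edgeSet | v ∈ (e : Sym2 V)}) := by
  ext a
  simp [K4set, eq_comm]

theorem ncard_K4set [Finite V] (v : V) [Fintype (G.neighborSet v)] :
    (K4set G v).ncard = G.degree v + 1 := by
  rw [K4set_eq_insert_image, Set.ncard_insert_of_notMem (by simp),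
    Set.ncard_image_of_injective _ Sum.inr_injective, ncard_setOf_mem_edgeSet_eq_degree]

theorem isClique_K4set (v : V) : (middleGraph G).IsClique (K4set G v) := by
  rintro a (rfl | ⟨e, hve, rfl⟩) b (rfl | ⟨f, hvf, rfl⟩) hab
  · exact absurd rfl hab
  · exact hvf
  · exact hve
  · exact ⟨fun h => hab (congrArg _ h), v, hve, hvf⟩

theorem disjoint_K4set_of_not_adj {v w : V} (hvw : v ≠ w) (hadj : ¬ G.Adj v w) :
    Disjoint (K4set G v) (K4set G w) := by
  rw [Set.disjoint_left]
  rintro a (rfl | ⟨e, hve, rfl⟩) (h | ⟨f, hwf, h⟩)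
  · exact hvw (Sum.inl_injective h)
  · exact Sum.inl_ne_inr h
  · exact Sum.inr_ne_inl h
  · cases Sum.inr_injective h
    have he : (e : Sym2 V) = s(v, w) := (Sym2.mem_and_mem_iff hvw).1 ⟨hve, hwf⟩
    exact hadj (G.mem_edgeSet.1 (he ▸ e.2))

variable {G} {N : Set (Sym2 G.edgeSet)}

theorem mem_compl_badSet_iff {v : V} :
    v ∈ (badSet G N)ᶜ ↔ ∃ p ∈ N, ∀ x ∈ p, v ∈ (x : Sym2 V) := by
  simp [badSet]

theorem eq_of_common_vertex_of_degree_le_three [Finite V] (hN : IsPerfMatchSet (lineGraph G) N)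
    {v : V} [Fintype (G.neighborSet v)] (hv : G.degree v ≤ 3) {p q : Sym2 G.edgeSet}
    (hp : p ∈ N) (hq : q ∈ N) (hvp : ∀ x ∈ p, v ∈ (x : Sym2 V))
    (hvq : ∀ x ∈ q, v ∈ (x : Sym2 V)) : p = q := by
  classical
  by_contra hpq
  have hcard : (p.toFinset ∪ q.toFinset).card = 4 := by
    rw [Finset.card_union_of_disjoint, Sym2.card_toFinset_of_not_isDiag,
      Sym2.card_toFinset_of_not_isDiag]
    · exact (lineGraph G).not_isDiag_of_mem_edgeSet (hN.1 hq)
    · exact (lineGraph G).not_isDiag_of_mem_edgeSet (hN.1 hp)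
    · exact Finset.disjoint_left.2 fun x hxp hxq =>
        hN.2.1 p hp q hq hpq x (Sym2.mem_toFinset.1 hxp) (Sym2.mem_toFinset.1 hxq)
  have hsub : ((p.toFinset ∪ q.toFinset : Finset G.edgeSet) : Set G.edgeSet) ⊆
      {e : G.edgeSet | v ∈ (e : Sym2 V)} := by
    intro x hx
    simp only [Finset.coe_union, Set.mem_union, Finset.mem_coe, Sym2.mem_toFinset] at hx
    exact hx.elim (hvp x) (hvq x)
  have := Set.ncard_le_ncard hsub
  rw [Set.ncard_coe_finset, hcard, ncard_setOf_mem_edgeSet_eq_degree] at this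
  omega

theorem ncard_compl_badSet [Finite V] [G.LocallyFinite] (hdeg : ∀ v, G.degree v ≤ 3)
    (hN : IsPerfMatchSet (lineGraph G) N) : (badSet G N)ᶜ.ncard = N.ncard := by
  have hmeet p (hp : p ∈ N) := existsUnique_common_vertex_of_mem_edgeSet_lineGraph G (hN.1 hp)
  symm
  refine Set.ncard_congr (fun p hp => (hmeet p hp).exists.choose) (fun p hp => ?_)
    (fun p q hp hq hpq => ?_) (fun v hv => ?_)
  · exact mem_compl_badSet_iff.2 ⟨p, hp, (hmeet p hp).exists.choose_spec⟩
  · refine eq_of_common_vertex_of_degree_le_three hN (hdeg _) hp hq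
      (hmeet p hp).exists.choose_spec ?_
    rw [hpq]
    exact (hmeet q hq).exists.choose_spec
  · obtain ⟨p, hp, hvp⟩ := mem_compl_badSet_iff.1 hv
    exact ⟨p, hp, (hmeet p hp).unique (hmeet p hp).exists.choose_spec hvp⟩

theorem not_adj_of_mem_badSet (hN : IsPerfMatchSet (lineGraph G) N) {v w : V}
    (hv : v ∈ badSet G N) (hw : w ∈ badSet G N) : ¬ G.Adj v w := by
  intro hvw
  obtain ⟨p, hp, hep⟩ := hN.2.2 ⟨s(v, w), hvw⟩
  obtain ⟨u, hu, -⟩ := existsUnique_common_vertex_of_mem_edgeSet_lineGraph G (hN.1 hp)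
  rcases Sym2.mem_iff.1 (hu _ hep) with rfl | rfl
  exacts [hv p hp hu, hw p hp hu]

end MiddleGraph

theorem line_graph_pm_empty_K4_disjoint_general {V : Type*} [Fintype V]
    (G : SimpleGraph V) [DecidableRel G.Adj]
    (hcubic : G.IsRegularOfDegree 3)
    (N : Set (Sym2 G.edgeSet)) (hN : IsPerfMatchSet (lineGraph G) N) :
    (badSet G N).ncard = Fintype.card V / 4 ∧
    (∀ v ∈ badSet G N, (K4set G v).ncard = 4 ∧
      ∀ a ∈ K4set G v, ∀ b ∈ K4set G v, a ≠ b → (middleGraph G).Adj a b) ∧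
    (∀ v ∈ badSet G N, ∀ w ∈ badSet G N, v ≠ w →
      Disjoint (K4set G v) (K4set G w)) := by
  refine ⟨?_, fun v _ => ⟨by rw [ncard_K4set, hcubic v], isClique_K4set G v⟩,
    fun v hv w hw hvw => disjoint_K4set_of_not_adj G hvw (not_adj_of_mem_badSet hN hv hw)⟩
  have hgood := ncard_compl_badSet (fun v => (hcubic v).le) hN
  have hmatching := hN.two_mul_ncard
  have hedges := hcubic.two_mul_card_edgeSet
  have hsplit := Set.ncard_add_ncard_compl (badSet G N)
  rw [Nat.card_eq_fintype_card] at hsplit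
  omega

/-- Let `G` be a connected cubic graph with `n` vertices and an even
number of edges, and `N` a perfect matching of `L(G)`.  Then there are exactly `n/4`
vertices `v` whose `K₄`-subgraph `G_v` contains no edge of `N`, and the corresponding
subgraphs `G_v` are complete on four vertices and pairwise vertex-disjoint. -/
theorem line_graph_pm_empty_K4_disjoint {V : Type*} [Fintype V] [DecidableEq V]
    (G : SimpleGraph V) [DecidableRel G.Adj]
    (hconn : G.Connected) (hcubic : G.IsRegularOfDegree 3)
    (heven : Even G.edgeFinset.card)
    (N : Set (Sym2 G.edgeSet)) (hN : IsPerfMatchSet (lineGraph G) N) :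
    (badSet G N).ncard = Fintype.card V / 4 ∧
    (∀ v ∈ badSet G N, (K4set G v).ncard = 4 ∧
      ∀ a ∈ K4set G v, ∀ b ∈ K4set G v, a ≠ b → (middleGraph G).Adj a b) ∧
    (∀ v ∈ badSet G N, ∀ w ∈ badSet G N, v ≠ w →
      Disjoint (K4set G v) (K4set G w)) :=
  line_graph_pm_empty_K4_disjoint_general G hcubic N hN
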